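/- Let n be a positive integer, let ‖·‖₁ and ‖·‖₂ be two norms on ℝⁿ, and let m₁, m₂ > 0 be real numbers such that m₁·‖x‖₂ ≤ ‖x‖₁ ≤ m₂·‖x‖₂ for all x ∈ ℝⁿ. Then for all nonzero vectors a, b ∈ ℝⁿ one has ‖ a/‖a‖₁ − b/‖b‖₁ ‖₁ ≤ (2m₂/m₁) · ‖ a/‖a‖₂ − b/‖b‖₂ ‖₂. -/

import Mathlib

/-! Normalising with respect to a seminorm satisfies the classical estimate
`p(u/p(u) - v/p(v)) ≤ 2 p(u - v) / p(u)`. Apply it for `p = N₁` to the `N₂`-unit vectors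
`u = a/N₂(a)` and `v = b/N₂(b)`: they have the same `N₁`-directions as `a` and `b`, and
`N₁(u) ≥ m₁`, `N₁(u - v) ≤ m₂ N₂(u - v)`. -/

namespace Seminorm

variable {E : Type*} [AddCommGroup E] [Module ℝ E] (p : Seminorm ℝ E)

theorem map_inv_smul_self {x : E} (hx : 0 < p x) : p ((p x)⁻¹ • x) = 1 := by
  rw [map_smul_eq_mul, norm_inv, Real.norm_of_nonneg hx.le, inv_mul_cancel₀ hx.ne']

theorem inv_map_smul_smul_of_pos {c : ℝ} (hc : 0 < c) (x : E) :
    (p (c • x))⁻¹ • (c • x) = (p x)⁻¹ • x := by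
  rw [map_smul_eq_mul, Real.norm_of_nonneg hc.le, smul_smul, mul_inv_rev,
    inv_mul_cancel_right₀ hc.ne']

theorem abs_inv_sub_inv_mul_le {u : E} (hu : 0 < p u) (v : E) :
    |(p u)⁻¹ - (p v)⁻¹| * p v ≤ (p u)⁻¹ * p (u - v) := by
  rcases (apply_nonneg p v).eq_or_lt with hv | hv
  · rw [← hv, mul_zero]
    exact mul_nonneg (inv_nonneg.2 hu.le) (apply_nonneg p _)
  calc |(p u)⁻¹ - (p v)⁻¹| * p v = (p u)⁻¹ * |p u - p v| := by
        rw [inv_sub_inv hu.ne' hv.ne', abs_div, abs_mul, abs_of_pos hu, abs_of_pos hv,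
          abs_sub_comm]
        field_simp
    _ ≤ (p u)⁻¹ * p (u - v) := by
        gcongr
        exact abs_sub_map_le_sub p u v

theorem map_inv_smul_sub_inv_smul_le {u : E} (hu : 0 < p u) (v : E) :
    p ((p u)⁻¹ • u - (p v)⁻¹ • v) ≤ 2 * p (u - v) / p u := by
  have hsplit : (p u)⁻¹ • u - (p v)⁻¹ • v = (p u)⁻¹ • (u - v) + ((p u)⁻¹ - (p v)⁻¹) • v := by
    rw [smul_sub, sub_smul]
    abel
  calc p ((p u)⁻¹ • u - (p v)⁻¹ • v)
      ≤ (p u)⁻¹ * p (u - v) + |(p u)⁻¹ - (p v)⁻¹| * p v := by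
        rw [hsplit]
        refine (map_add_le_add p _ _).trans_eq ?_
        rw [map_smul_eq_mul, map_smul_eq_mul, Real.norm_eq_abs, Real.norm_eq_abs,
          abs_of_pos (inv_pos.2 hu)]
    _ ≤ (p u)⁻¹ * p (u - v) + (p u)⁻¹ * p (u - v) :=
        add_le_add_right (abs_inv_sub_inv_mul_le p hu v) _
    _ = 2 * p (u - v) / p u := by ring

theorem map_inv_smul_sub_inv_smul_le_mul_of_bounds (q : Seminorm ℝ E) {m₁ m₂ : ℝ}
    (hm₁ : 0 < m₁) (hlow : ∀ x, m₁ * q x ≤ p x) (hup : ∀ x, p x ≤ m₂ * q x)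
    {a b : E} (ha : 0 < q a) (hb : 0 < q b) :
    p ((p a)⁻¹ • a - (p b)⁻¹ • b) ≤ 2 * m₂ / m₁ * q ((q a)⁻¹ • a - (q b)⁻¹ • b) := by
  set u := (q a)⁻¹ • a
  set v := (q b)⁻¹ • b
  have hu : m₁ ≤ p u := by
    simpa [u, map_inv_smul_self q ha] using hlow u
  rw [← inv_map_smul_smul_of_pos p (inv_pos.2 ha) a, ← inv_map_smul_smul_of_pos p (inv_pos.2 hb) b]
  have huv : 0 ≤ p (u - v) := apply_nonneg p _
  calc p ((p u)⁻¹ • u - (p v)⁻¹ • v) ≤ 2 * p (u - v) / p u :=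
        map_inv_smul_sub_inv_smul_le p (hm₁.trans_le hu) v
    _ ≤ 2 * p (u - v) / m₁ := by gcongr
    _ ≤ 2 * (m₂ * q (u - v)) / m₁ := by gcongr; exact hup _
    _ = 2 * m₂ / m₁ * q (u - v) := by ring

end Seminorm

theorem stmt_7_general (n : ℕ)
    (N₁ N₂ : (Fin n → ℝ) → ℝ)
    (hN₁smul : ∀ (t : ℝ) (x : Fin n → ℝ), N₁ (t • x) = |t| * N₁ x)
    (hN₁add : ∀ x y, N₁ (x + y) ≤ N₁ x + N₁ y)
    (hN₂zero : ∀ x, N₂ x = 0 ↔ x = 0)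
    (hN₂smul : ∀ (t : ℝ) (x : Fin n → ℝ), N₂ (t • x) = |t| * N₂ x)
    (hN₂add : ∀ x y, N₂ (x + y) ≤ N₂ x + N₂ y)
    (m₁ m₂ : ℝ) (hm₁ : 0 < m₁)
    (hle : ∀ x, m₁ * N₂ x ≤ N₁ x ∧ N₁ x ≤ m₂ * N₂ x) :
    ∀ a b : Fin n → ℝ, a ≠ 0 → b ≠ 0 →
      N₁ ((N₁ a)⁻¹ • a - (N₁ b)⁻¹ • b) ≤ (2 * m₂ / m₁) * N₂ ((N₂ a)⁻¹ • a - (N₂ b)⁻¹ • b) := by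
  intro a b ha hb
  let p₁ : Seminorm ℝ (Fin n → ℝ) := Seminorm.of N₁ hN₁add hN₁smul
  let p₂ : Seminorm ℝ (Fin n → ℝ) := Seminorm.of N₂ hN₂add hN₂smul
  have hpos : ∀ x, x ≠ 0 → 0 < p₂ x := fun x hx =>
    (apply_nonneg p₂ x).lt_of_ne' (mt (hN₂zero x).1 hx)
  exact p₁.map_inv_smul_sub_inv_smul_le_mul_of_bounds p₂ hm₁ (fun x => (hle x).1)
    (fun x => (hle x).2) (hpos a ha) (hpos b hb)

/-- Quantitative version of Lemma 6.6: if `m₁·N₂(x) ≤ N₁(x) ≤ m₂·N₂(x)` for all `x`, then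
`N₁(a/N₁(a) − b/N₁(b)) ≤ (2m₂/m₁) · N₂(a/N₂(a) − b/N₂(b))` for all nonzero `a, b`. -/
theorem stmt_7 (n : ℕ) (hn : 0 < n)
    (N₁ N₂ : (Fin n → ℝ) → ℝ)
    (hN₁zero : ∀ x, N₁ x = 0 ↔ x = 0)
    (hN₁smul : ∀ (t : ℝ) (x : Fin n → ℝ), N₁ (t • x) = |t| * N₁ x)
    (hN₁add : ∀ x y, N₁ (x + y) ≤ N₁ x + N₁ y)
    (hN₂zero : ∀ x, N₂ x = 0 ↔ x = 0)
    (hN₂smul : ∀ (t : ℝ) (x : Fin n → ℝ), N₂ (t • x) = |t| * N₂ x)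
    (hN₂add : ∀ x y, N₂ (x + y) ≤ N₂ x + N₂ y)
    (m₁ m₂ : ℝ) (hm₁ : 0 < m₁) (hm₂ : 0 < m₂)
    (hle : ∀ x, m₁ * N₂ x ≤ N₁ x ∧ N₁ x ≤ m₂ * N₂ x) :
    ∀ a b : Fin n → ℝ, a ≠ 0 → b ≠ 0 →
      N₁ ((N₁ a)⁻¹ • a - (N₁ b)⁻¹ • b) ≤ (2 * m₂ / m₁) * N₂ ((N₂ a)⁻¹ • a - (N₂ b)⁻¹ • b) :=
  stmt_7_general n N₁ N₂ hN₁smul hN₁add hN₂zero hN₂smul hN₂add m₁ m₂ hm₁ hle
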